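/- arXiv:math/0612143 — 5 statements merged into one kernel-verified Lean document; each statement's English description precedes it below -/
import Mathlib

section
/- Let V be a topological space, Ω ⊆ V a subset, and H : [0,1] × [0,1] → V a continuous map. Let δ : S¹ → (0,1) × (0,1) be a continuous injective map from the unit circle into the open unit square, let J := δ(S¹), and let U := the union of the bounded connected components of ℝ² \ J (one has U ⊆ (0,1) × (0,1)). Assume that H(J) ⊆ Ω and that the loop H ∘ δ : S¹ → Ω extends to a continuous map of the closed unit disc into Ω (equivalently, H ∘ δ is null-homotopic in Ω). Then there exists a continuous map H' : [0,1] × [0,1] → V such that H'(x) = H(x) for every x ∈ ([0,1] × [0,1]) \ U and H'(U) ⊆ Ω. -/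
/-- The closed unit square `[0,1] × [0,1] ⊆ ℝ²`. -/
def unitSquare : Set (ℝ × ℝ) := Set.Icc (0 : ℝ) 1 ×ˢ Set.Icc (0 : ℝ) 1

/-- The open unit square `(0,1) × (0,1) ⊆ ℝ²`. -/
def openUnitSquare : Set (ℝ × ℝ) := Set.Ioo (0 : ℝ) 1 ×ˢ Set.Ioo (0 : ℝ) 1

lemma openUnitSquare_subset_unitSquare : openUnitSquare ⊆ unitSquare :=
  Set.prod_mono Set.Ioo_subset_Icc_self Set.Ioo_subset_Icc_self

/-- Surgery of homotopies along a Jordan curve: if `H` maps the Jordan curve `J = δ(S¹)` into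
`Ω` and the loop `H ∘ δ` is null-homotopic in `Ω` (it extends to the closed disc with values
in `Ω`), then one can modify `H` on the union `U` of the bounded connected components of the
complement of `J`, keeping it equal to `H` outside `U`, so that `U` is mapped into `Ω`. -/
theorem surgery_along_jordan_curve
    {V : Type*} [TopologicalSpace V] (Ω : Set V)
    (H : C(unitSquare, V))
    (δ : Metric.sphere (0 : ℂ) 1 → ℝ × ℝ)
    (hδc : Continuous δ) (hδi : Function.Injective δ)
    (hδmem : ∀ z, δ z ∈ openUnitSquare)
    (J U : Set (ℝ × ℝ))
    (hJ : J = Set.range δ)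
    (hU : U = {p | p ∈ Jᶜ ∧ Bornology.IsBounded (connectedComponentIn Jᶜ p)})
    (hHJ : ∀ x : unitSquare, (x : ℝ × ℝ) ∈ J → H x ∈ Ω)
    (hnull : ∃ G : C(Metric.closedBall (0 : ℂ) 1, V),
      (∀ w, G w ∈ Ω) ∧
      ∀ z : Metric.sphere (0 : ℂ) 1,
        G ⟨(z : ℂ), Metric.sphere_subset_closedBall z.2⟩ =
          H ⟨δ z, openUnitSquare_subset_unitSquare (hδmem z)⟩) :
    ∃ H' : C(unitSquare, V),
      (∀ x : unitSquare, (x : ℝ × ℝ) ∉ U → H' x = H x) ∧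
      (∀ x : unitSquare, (x : ℝ × ℝ) ∈ U → H' x ∈ Ω) := by
  classical
  obtain ⟨G, hGΩ, hGδ⟩ := hnull
  have hJcl : IsClosed J := hJ ▸ (isCompact_range hδc).isClosed
  -- U is open
  have hUopen : IsOpen U := by
    rw [isOpen_iff_mem_nhds]
    intro p hp
    rw [hU] at hp
    have h1 : IsOpen (connectedComponentIn Jᶜ p) := hJcl.isOpen_compl.connectedComponentIn
    refine Filter.mem_of_superset (h1.mem_nhds (mem_connectedComponentIn hp.1)) ?_
    intro q hq
    rw [hU]
    exact ⟨connectedComponentIn_subset _ _ hq, by rw [← connectedComponentIn_eq hq]; exact hp.2⟩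
  -- frontier of U is inside J
  have hfr : closure U \ U ⊆ J := by
    intro p hp
    by_contra hpJ
    have hC : IsOpen (connectedComponentIn Jᶜ p) := hJcl.isOpen_compl.connectedComponentIn
    obtain ⟨q, hq, hqU⟩ :=
      mem_closure_iff.mp hp.1 _ hC (mem_connectedComponentIn hpJ)
    rw [hU] at hqU
    apply hp.2
    rw [hU]
    exact ⟨hpJ, by rw [connectedComponentIn_eq hq]; exact hqU.2⟩
  -- homeomorphism of the circle onto J
  let e0 : Metric.sphere (0 : ℂ) 1 ≃ Set.range δ := Equiv.ofInjective δ hδi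
  have he0c : Continuous e0 := hδc.subtype_mk _
  let e : Metric.sphere (0 : ℂ) 1 ≃ₜ Set.range δ :=
    Continuous.homeoOfEquivCompactToT2 (f := e0) he0c
  -- the inverse map as a map into the closed disc
  let ψ : C(Set.range δ, Metric.closedBall (0 : ℂ) 1) :=
    ⟨fun q => ⟨(e.symm q : ℂ), Metric.sphere_subset_closedBall (e.symm q).2⟩,
      (continuous_subtype_val.comp e.symm.continuous).subtype_mk _⟩
  have hJr : IsClosed (Set.range δ) := hJ ▸ hJcl
  obtain ⟨g, hg⟩ := ψ.exists_restrict_eq hJr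
  -- key agreement on J
  have key : ∀ x : unitSquare, (x : ℝ × ℝ) ∈ J → G (g x) = H x := by
    intro x hx
    rw [hJ] at hx
    have h1 : g (x : ℝ × ℝ) = ψ ⟨x, hx⟩ := ContinuousMap.congr_fun hg ⟨x, hx⟩
    have h2 : δ (e.symm ⟨(x : ℝ × ℝ), hx⟩) = (x : ℝ × ℝ) :=
      congrArg Subtype.val (e.apply_symm_apply ⟨(x : ℝ × ℝ), hx⟩)
    have h3 := hGδ (e.symm ⟨(x : ℝ × ℝ), hx⟩)
    rw [h1]
    have h4 : ψ ⟨(x : ℝ × ℝ), hx⟩ =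
        (⟨((e.symm ⟨(x : ℝ × ℝ), hx⟩ : Metric.sphere (0:ℂ) 1) : ℂ),
          Metric.sphere_subset_closedBall (e.symm ⟨(x : ℝ × ℝ), hx⟩).2⟩ :
          Metric.closedBall (0:ℂ) 1) := rfl
    rw [h4, h3]
    exact congrArg H (Subtype.ext h2)
  -- define the new map by gluing
  have hFc : Continuous fun x : unitSquare =>
      if (x : ℝ × ℝ) ∈ closure U then G (g x) else H x := by
    apply Continuous.if
    · intro x hx
      have hx' : (x : ℝ × ℝ) ∈ frontier (closure U) := by
        have : {x : unitSquare | (x : ℝ × ℝ) ∈ closure U} =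
            (Subtype.val) ⁻¹' closure U := rfl
        rw [this] at hx
        exact continuous_subtype_val.frontier_preimage_subset _ hx
      have hxJ : (x : ℝ × ℝ) ∈ J := by
        apply hfr
        constructor
        · have h := hx'.1
          rw [closure_closure] at h
          exact h
        · intro hxU
          exact hx'.2 (interior_mono subset_closure (by rw [hUopen.interior_eq]; exact hxU))
      exact key x hxJ
    · exact G.continuous.comp (g.continuous.comp continuous_subtype_val)
    · exact H.continuous
  refine ⟨⟨_, hFc⟩, ?_, ?_⟩
  · intro x hxU
    by_cases hx : (x : ℝ × ℝ) ∈ closure U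
    · simp only [ContinuousMap.coe_mk, if_pos hx]
      exact key x (hfr ⟨hx, hxU⟩)
    · simp only [ContinuousMap.coe_mk, if_neg hx]
  · intro x hxU
    simp only [ContinuousMap.coe_mk, if_pos (subset_closure hxU)]
    exact hGΩ _
end

section
/- Let G and T be simple graphs, with G connected and T acyclic (T contains no cycle). Let f : G → T be a graph homomorphism that is locally injective, i.e. for every vertex v of G the restriction of f to the neighbor set of v is injective. Then f is injective on vertices and G is acyclic (hence G is a tree). -/
/-!
In an acyclic graph a walk is a path as soon as consecutive edges are distinct. A trail has
this property, and a locally injective homomorphism preserves it, so `f` maps trails of `G` to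
paths of `T`. A path of `G` between vertices with the same image, or a cycle of `G`, would thus
map to a closed path, which has length zero.
-/

namespace SimpleGraph

variable {V W : Type*} {G : SimpleGraph V} {G' : SimpleGraph W}

theorem Walk.IsPath.length_eq_zero_of_eq {u v : V} {p : G.Walk u v} (hp : p.IsPath)
    (h : u = v) : p.length = 0 := by
  subst h
  exact length_eq_zero_iff.mpr (isPath_iff_nil.mp hp)

theorem Walk.isChain_ne_edges_map {f : G →g G'} (hf : ∀ v, Set.InjOn f (G.neighborSet v)) :
    ∀ {u v : V} {p : G.Walk u v}, p.edges.IsChain (· ≠ ·) → (p.map f).edges.IsChain (· ≠ ·)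
  | _, _, .nil, _ => by simp
  | _, _, .cons _ .nil, _ => by simp
  | u, _, .cons (v := x) hux (.cons (v := y) hxy p), hp => by
    rw [edges_cons, edges_cons, List.isChain_cons_cons] at hp
    rw [map_cons, edges_cons, map_cons, edges_cons, List.isChain_cons_cons]
    refine ⟨?_, isChain_ne_edges_map hf (p := .cons hxy p) hp.2⟩
    intro heq
    rcases Sym2.eq_iff.mp heq with ⟨hux', -⟩ | ⟨huy, -⟩
    · exact (f.map_adj hux).ne hux'
    · have hu : u = y := hf x hux.symm hxy huy
      exact hp.1 (by rw [hu, Sym2.eq_swap])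

theorem IsAcyclic.isPath_map_of_isTrail {f : G →g G'} (hG' : G'.IsAcyclic)
    (hf : ∀ v, Set.InjOn f (G.neighborSet v)) {u v : V} {p : G.Walk u v} (hp : p.IsTrail) :
    (p.map f).IsPath :=
  (hG'.isPath_iff_isChain _).mpr (Walk.isChain_ne_edges_map hf hp.edges_nodup.isChain)

end SimpleGraph

open SimpleGraph

/-- A locally injective graph homomorphism from a connected graph to an acyclic graph
is injective, and the source graph is itself acyclic (hence a tree). -/
theorem locally_injective_hom_to_tree
    {V W : Type*} {G : SimpleGraph V} {T : SimpleGraph W}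
    (hG : G.Connected) (hT : T.IsAcyclic)
    (f : G →g T)
    (hloc : ∀ v : V, Set.InjOn f (G.neighborSet v)) :
    Function.Injective f ∧ G.IsAcyclic := by
  refine ⟨fun a b hab => ?_, fun v c hc => ?_⟩
  · obtain ⟨p, hp⟩ := hG.exists_isPath a b
    have hlen := (hT.isPath_map_of_isTrail hloc hp.isTrail).length_eq_zero_of_eq hab
    rw [Walk.length_map] at hlen
    exact Walk.eq_of_length_eq_zero hlen
  · have hlen := (hT.isPath_map_of_isTrail hloc hc.isTrail).length_eq_zero_of_eq rfl
    rw [Walk.length_map] at hlen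
    have := hc.three_le_length
    omega
end

section
/- Let γ : ℝ → ℂ \ {0} be a continuously differentiable map which is 1-periodic, satisfies Re(γ′(s)/(i·γ(s))) > 0 for every s (equivalently, [[γ′(s)/(i·γ(s))]] < π/2 for every s, i.e. γ has finite rugosity), and has winding number 1 around the origin, i.e. ∫₀¹ γ′(s)/γ(s) ds = 2πi. Then for every complex number w with |w| = 1 there is exactly one s ∈ [0,1) such that γ(s)/|γ(s)| = w; in particular the image of γ meets every open ray from the origin in exactly one point, so the curve bounds a region star-shaped with respect to 0. -/
/-!
Write `γ(s) = γ(0) · exp F(s)` with `F(s) = ∫₀ˢ γ′/γ`, so that the direction of `γ(s)` is that of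
`γ(0)` turned by the angle `θ(s) = Im F(s)`. Since `θ′ = Im(γ′/γ) = Re(γ′/(iγ)) > 0`, `θ` is
strictly increasing, and the winding hypothesis says `θ(1) = θ(0) + 2π`. Hence `θ` maps `[0,1)`
bijectively onto a half-open interval of length `2π`, which `t ↦ exp(it)` maps bijectively onto
the unit circle.
-/

open Complex Set intervalIntegral
open scoped Real

theorem Complex.re_div_I_mul (z w : ℂ) : (z / (I * w)).re = (z / w).im := by
  rw [mul_comm, ← div_div, div_I]; simp

theorem Complex.mul_exp_div_norm {c : ℂ} (hc : c ≠ 0) (z : ℂ) :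
    c * exp z / ‖c * exp z‖ = c / ‖c‖ * exp (z.im * I) := by
  have hz : exp z = Real.exp z.re * exp (z.im * I) := by
    rw [ofReal_exp, ← Complex.exp_add, re_add_im]
  rw [norm_mul, norm_exp, hz]
  push_cast
  field_simp

theorem Circle.bijOn_exp_Ico (a : ℝ) : BijOn Circle.exp (Ico a (a + 2 * π)) univ := by
  refine ⟨mapsTo_univ _ _, Circle.exp_injOn_Ico (by simp), fun z _ => ?_⟩
  obtain ⟨x, hx, hzx⟩ := Circle.periodic_exp.exists_mem_Ico Real.two_pi_pos (arg z) a
  exact ⟨x, hx, hzx ▸ Circle.exp_arg z⟩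

theorem StrictMono.bijOn_Ico {α δ : Type*} [ConditionallyCompleteLinearOrder α]
    [TopologicalSpace α] [OrderTopology α] [DenselyOrdered α]
    [LinearOrder δ] [TopologicalSpace δ] [OrderClosedTopology δ]
    {f : α → δ} (hf : StrictMono f) (hc : Continuous f) {a b : α} (hab : a ≤ b) :
    BijOn f (Ico a b) (Ico (f a) (f b)) :=
  ⟨hf.mapsTo_Ico, hf.injective.injOn, intermediate_value_Ico hab hc.continuousOn⟩

theorem Set.BijOn.existsUnique {α β : Type*} {f : α → β} {s : Set α} {t : Set β}
    (h : BijOn f s t) {y : β} (hy : y ∈ t) :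
    ∃! x, x ∈ s ∧ f x = y :=
  let ⟨x, hx, hxy⟩ := h.surjOn hy
  ⟨x, ⟨hx, hxy⟩, fun _ ⟨hx', hx'y⟩ => h.injOn hx' hx (hx'y.trans hxy.symm)⟩

theorem StrictMono.existsUnique_mem_Ico_exp_mul_I_eq {θ : ℝ → ℝ} (hθ : StrictMono θ)
    (hc : Continuous θ) {a b : ℝ} (hab : a ≤ b) (hwind : θ b = θ a + 2 * π) {u : ℂ} (hu : ‖u‖ = 1) :
    ∃! s, s ∈ Ico a b ∧ exp (θ s * I) = u := by
  have hbij : BijOn (Circle.exp ∘ θ) (Ico a b) univ :=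
    (Circle.bijOn_exp_Ico (θ a)).comp (hwind ▸ hθ.bijOn_Ico hc hab)
  exact existsUnique_congr (fun s => and_congr_right' Circle.ext_iff) |>.1
    (hbij.existsUnique (y := ⟨u, mem_sphere_zero_iff_norm.2 hu⟩) trivial)

theorem hasDerivAt_integral_deriv_div {γ : ℝ → ℂ} (hγ : ContDiff ℝ 1 γ) (hne : ∀ s, γ s ≠ 0)
    (a s : ℝ) : HasDerivAt (fun s => ∫ t in a..s, deriv γ t / γ t) (deriv γ s / γ s) s :=
  (((hγ.continuous_deriv le_rfl).div hγ.continuous hne).integral_hasStrictDerivAt a s).hasDerivAt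

theorem eq_mul_exp_integral_deriv_div {γ : ℝ → ℂ} (hγ : ContDiff ℝ 1 γ) (hne : ∀ s, γ s ≠ 0)
    (a s : ℝ) : γ s = γ a * exp (∫ t in a..s, deriv γ t / γ t) := by
  set F : ℝ → ℂ := fun s => ∫ t in a..s, deriv γ t / γ t
  have hconst t : HasDerivAt (fun t => γ t * exp (-F t)) 0 t := by
    refine ((hγ.differentiable one_ne_zero t).hasDerivAt.mul
      (hasDerivAt_integral_deriv_div hγ hne a t).neg.cexp).congr_deriv ?_
    field_simp [hne t]
    ring
  have h := is_const_of_deriv_eq_zero (fun t => (hconst t).differentiableAt)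
    (fun t => (hconst t).deriv) s a
  simp only [F, integral_same, neg_zero, exp_zero, mul_one, exp_neg, ← div_eq_mul_inv] at h
  exact (div_eq_iff (exp_ne_zero _)).1 h

theorem finite_rugosity_curve_star_shaped_general
    (γ : ℝ → ℂ) (hC1 : ContDiff ℝ 1 γ)
    (hne : ∀ s : ℝ, γ s ≠ 0)
    (hrug : ∀ s : ℝ, 0 < (deriv γ s / (Complex.I * γ s)).re)
    (hwind : (∫ s in (0 : ℝ)..1, deriv γ s / γ s) = 2 * Real.pi * Complex.I) :
    ∀ w : ℂ, ‖w‖ = 1 →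
      ∃! s : ℝ, s ∈ Set.Ico (0 : ℝ) 1 ∧ γ s / (‖γ s‖ : ℂ) = w := by
  intro w hw
  set θ : ℝ → ℝ := fun s => (∫ t in (0 : ℝ)..s, deriv γ t / γ t).im
  have hθ' s : HasDerivAt θ (deriv γ s / γ s).im s :=
    imCLM.hasFDerivAt.comp_hasDerivAt s (hasDerivAt_integral_deriv_div hC1 hne 0 s)
  have hθ_mono : StrictMono θ :=
    strictMono_of_hasDerivAt_pos hθ' fun s => re_div_I_mul _ _ ▸ hrug s
  have hθ_cont : Continuous θ := continuous_iff_continuousAt.2 fun s => (hθ' s).continuousAt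
  have hθ_wind : θ 1 = θ 0 + 2 * π := by simp [θ, hwind]
  set c : ℂ := γ 0 / ‖γ 0‖
  have hc : ‖c‖ = 1 := by simp [c, hne 0]
  have hdir s : γ s / ‖γ s‖ = c * exp (θ s * I) := by
    rw [eq_mul_exp_integral_deriv_div hC1 hne 0 s, mul_exp_div_norm (hne 0)]
  refine existsUnique_congr (fun s => and_congr_right' ?_) |>.1
    (hθ_mono.existsUnique_mem_Ico_exp_mul_I_eq hθ_cont zero_le_one hθ_wind
      (u := w / c) (by simp [hw, hc]))
  rw [hdir, eq_div_iff (norm_ne_zero_iff.1 (hc ▸ one_ne_zero)), mul_comm]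

/-- A `C¹`, 1-periodic curve in `ℂ \ {0}` of finite rugosity (`Re(γ′/(iγ)) > 0`) and winding
number `1` around the origin meets every ray from the origin exactly once: for every `w` of
modulus one there is a unique `s ∈ [0,1)` with `γ(s)/|γ(s)| = w`; hence the curve bounds a
region star-shaped with respect to `0`. -/
theorem finite_rugosity_curve_star_shaped
    (γ : ℝ → ℂ) (hC1 : ContDiff ℝ 1 γ)
    (hper : ∀ s : ℝ, γ (s + 1) = γ s)
    (hne : ∀ s : ℝ, γ s ≠ 0)
    (hrug : ∀ s : ℝ, 0 < (deriv γ s / (Complex.I * γ s)).re)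
    (hwind : (∫ s in (0 : ℝ)..1, deriv γ s / γ s) = 2 * Real.pi * Complex.I) :
    ∀ w : ℂ, ‖w‖ = 1 →
      ∃! s : ℝ, s ∈ Set.Ico (0 : ℝ) 1 ∧ γ s / (‖γ s‖ : ℂ) = w :=
  finite_rugosity_curve_star_shaped_general γ hC1 hne hrug hwind
end

section
/- Let λ > 0 be a real number, R₀ > 0, let h be a holomorphic function on the open disc {z ∈ ℂ : |z| < R₀} with h(0) ≠ 0, let −π < α ≤ β < π, and define g(z) := z^λ · h(z), where z^λ denotes the principal branch. Then there exist r ∈ (0, R₀) and C > 0 such that for every z with 0 < |z| ≤ r and α ≤ arg z ≤ β one has: g(z) ≠ 0, |g(z)| ≤ C·|z|^λ, and the principal argument of z·g′(z)/g(z) satisfies |arg(z·g′(z)/g(z))| ≤ C·|z|. -/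
/-!
On the slit plane `z * g'(z) / g(z) = λ + z * h'(z) / h(z)`, and since `h` is analytic at `0`
with `h 0 ≠ 0`, the logarithmic derivative `h'/h` is bounded near `0`. So `z g'/g` is a
perturbation of size `O(|z|)` of the positive real `λ`, whose argument is `O(|z|)` because
`|arg w| ≤ |Im w| / Re w` when `Re w > 0`. The bound `|g(z)| ≤ C |z|^λ` is just boundedness of `h`.
-/

open Complex Topology

lemma Complex.abs_arg_le_abs_im_div_re {z : ℂ} (hz : 0 < z.re) : |arg z| ≤ |z.im| / z.re := by
  have htan : Real.tan |arg z| = |z.im| / z.re := by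
    rcases le_or_gt 0 (arg z) with h | h
    · rw [abs_of_nonneg h, tan_arg, abs_of_nonneg (arg_nonneg_iff.1 h)]
    · rw [abs_of_neg h, Real.tan_neg, tan_arg, abs_of_neg (arg_neg_iff.1 h), neg_div]
  exact htan ▸ Real.le_tan (abs_nonneg _) (abs_arg_lt_pi_div_two_iff.2 (Or.inl hz))

lemma Complex.abs_arg_ofReal_add_le {l : ℝ} (hl : 0 < l) {w : ℂ} (hw : ‖w‖ ≤ l / 2) :
    |arg (l + w)| ≤ 2 / l * ‖w‖ := by
  have hre : l / 2 ≤ (l + w).re := by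
    have := neg_abs_le w.re
    have := abs_re_le_norm w
    simp only [add_re, ofReal_re]
    linarith
  calc |arg (l + w)| ≤ |(l + w).im| / (l + w).re := abs_arg_le_abs_im_div_re (by linarith)
    _ ≤ ‖w‖ / (l / 2) := by
      gcongr
      simpa using abs_im_le_norm w
    _ = 2 / l * ‖w‖ := by field_simp

lemma Complex.logDeriv_cpow_const {z : ℂ} (hz : z ∈ slitPlane) (a : ℂ) :
    logDeriv (· ^ a) z = a / z := by
  have hz0 : z ≠ 0 := slitPlane_ne_zero hz
  rw [logDeriv_apply, (hasStrictDerivAt_cpow_const hz).hasDerivAt.deriv, cpow_sub _ _ hz0,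
    cpow_one]
  have : z ^ a ≠ 0 := cpow_ne_zero_iff.2 (Or.inl hz0)
  field_simp

lemma Complex.mul_logDeriv_cpow_const_mul {h : ℂ → ℂ} {z : ℂ} (a : ℂ) (hz : z ∈ slitPlane)
    (hd : DifferentiableAt ℂ h z) (hhz : h z ≠ 0) :
    z * logDeriv (fun w ↦ w ^ a * h w) z = a + z * logDeriv h z := by
  have hz0 : z ≠ 0 := slitPlane_ne_zero hz
  rw [logDeriv_mul (f := (· ^ a)) z (cpow_ne_zero_iff.2 (Or.inl hz0)) hhz
    (differentiableAt_id.cpow_const hz) hd, logDeriv_cpow_const hz]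
  field_simp

lemma AnalyticAt.eventually_norm_lt_and_norm_logDeriv_lt {𝕜 𝕜' : Type*}
    [NontriviallyNormedField 𝕜] [NontriviallyNormedField 𝕜'] [NormedAlgebra 𝕜 𝕜']
    [CompleteSpace 𝕜'] {f : 𝕜 → 𝕜'} {a : 𝕜} (hf : AnalyticAt 𝕜 f a) (ha : f a ≠ 0) :
    ∀ᶠ z in 𝓝 a, DifferentiableAt 𝕜 f z ∧ f z ≠ 0 ∧ ‖f z‖ < ‖f a‖ + 1 ∧
      ‖logDeriv f z‖ < ‖logDeriv f a‖ + 1 := by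
  have hlog : ContinuousAt (logDeriv f) a := hf.deriv.continuousAt.div hf.continuousAt ha
  filter_upwards [hf.eventually_analyticAt, hf.continuousAt.eventually_ne ha,
    hf.continuousAt.norm.eventually_lt continuousAt_const (lt_add_one _),
    hlog.norm.eventually_lt continuousAt_const (lt_add_one _)] with z hz hz0 hM hK
  exact ⟨hz.differentiableAt, hz0, hM, hK⟩

theorem sector_estimates_for_principal_power_general
    (l : ℝ) (hl : 0 < l) (R₀ : ℝ) (hR₀ : 0 < R₀)
    (h : ℂ → ℂ) (hh : DifferentiableOn ℂ h (Metric.ball 0 R₀)) (hh0 : h 0 ≠ 0)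
    (α β : ℝ) (hβ : β < Real.pi)
    (g : ℂ → ℂ) (hg : ∀ z : ℂ, g z = z ^ (l : ℂ) * h z) :
    ∃ r ∈ Set.Ioo (0 : ℝ) R₀, ∃ C > (0 : ℝ),
      ∀ z : ℂ, 0 < ‖z‖ → ‖z‖ ≤ r →
        α ≤ Complex.arg z → Complex.arg z ≤ β →
        g z ≠ 0 ∧
        ‖g z‖ ≤ C * ‖z‖ ^ l ∧
        |Complex.arg (z * deriv g z / g z)| ≤ C * ‖z‖ := by
  have hana : AnalyticAt ℂ h 0 := hh.analyticAt (Metric.isOpen_ball.mem_nhds (by simpa))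
  obtain ⟨ε, hε, hbounds⟩ :=
    Metric.eventually_nhds_iff_ball.1 (hana.eventually_norm_lt_and_norm_logDeriv_lt hh0)
  set M := ‖h 0‖ + 1
  set K := ‖logDeriv h 0‖ + 1
  refine ⟨min (min (ε / 2) (R₀ / 2)) (l / (2 * K)), ⟨by positivity, by simp [hR₀]⟩,
    max M (2 / l * K), by positivity, fun z hz0 hzr _ hzβ ↦ ?_⟩
  simp only [le_min_iff] at hzr
  obtain ⟨hd, hhz, hM, hK⟩ := hbounds z (mem_ball_zero_iff.2 (by linarith))
  have hslit : z ∈ slitPlane := mem_slitPlane_iff_arg.2 ⟨by linarith, norm_pos_iff.1 hz0⟩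
  have hw : ‖z * logDeriv h z‖ ≤ K * ‖z‖ := by
    rw [norm_mul, mul_comm]
    gcongr
  refine ⟨?_, ?_, ?_⟩
  · rw [hg]
    exact mul_ne_zero (cpow_ne_zero_iff.2 (Or.inl (slitPlane_ne_zero hslit))) hhz
  · rw [hg, norm_mul, norm_cpow_real, mul_comm]
    gcongr
    exact hM.le.trans (le_max_left _ _)
  · rw [mul_div_assoc, ← logDeriv_apply, funext hg, mul_logDeriv_cpow_const_mul _ hslit hd hhz]
    calc |arg (l + z * logDeriv h z)| ≤ 2 / l * ‖z * logDeriv h z‖ := by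
          have := (le_div_iff₀ (by positivity)).1 hzr.2
          exact abs_arg_ofReal_add_le hl (by linarith)
      _ ≤ 2 / l * (K * ‖z‖) := by gcongr
      _ ≤ max M (2 / l * K) * ‖z‖ := by
          rw [← mul_assoc]
          gcongr
          exact le_max_right _ _

/-- For `g(z) = z^λ·h(z)` with `λ > 0`, `h` holomorphic near `0` and `h(0) ≠ 0`, on a small
closed punctured sector one has `g(z) ≠ 0`, `|g(z)| ≤ C|z|^λ` and
`|arg(z·g′(z)/g(z))| ≤ C|z|`. -/
theorem sector_estimates_for_principal_power
    (l : ℝ) (hl : 0 < l) (R₀ : ℝ) (hR₀ : 0 < R₀)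
    (h : ℂ → ℂ) (hh : DifferentiableOn ℂ h (Metric.ball 0 R₀)) (hh0 : h 0 ≠ 0)
    (α β : ℝ) (hα : -Real.pi < α) (hαβ : α ≤ β) (hβ : β < Real.pi)
    (g : ℂ → ℂ) (hg : ∀ z : ℂ, g z = z ^ (l : ℂ) * h z) :
    ∃ r ∈ Set.Ioo (0 : ℝ) R₀, ∃ C > (0 : ℝ),
      ∀ z : ℂ, 0 < ‖z‖ → ‖z‖ ≤ r →
        α ≤ Complex.arg z → Complex.arg z ≤ β →
        g z ≠ 0 ∧
        ‖g z‖ ≤ C * ‖z‖ ^ l ∧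
        |Complex.arg (z * deriv g z / g z)| ≤ C * ‖z‖ :=
  sector_estimates_for_principal_power_general l hl R₀ hR₀ h hh hh0 α β hβ g hg
end

section
/- Let λ > 0 be a real number, R₀ > 0, let h be a holomorphic function on the open disc {z ∈ ℂ : |z| < R₀} with h(0) ≠ 0, let −π < α ≤ β < π, and define g(z) := z^λ · h(z), where z^λ denotes the principal branch. Then there exist r ∈ (0, R₀) and C > 0 with the following property. Let μ : [0,1] → ℂ be any continuously differentiable path with nowhere-vanishing derivative such that 0 < |μ(s)| ≤ r and α ≤ arg μ(s) ≤ β for all s, and set ‖μ‖ := max_s |μ(s)| and E := sup_s [[μ′(s)/(i·μ(s))]] ∈ [0, +∞]. Then: (i) max_s |g(μ(s))| ≤ C·‖μ‖^λ; and (ii) if E + C·‖μ‖ < π/2, then for every s one has [[(g∘μ)′(s)/(i·g(μ(s)))]] ≤ E + C·‖μ‖; in other words, the rugosity of the image path g∘μ is at most the rugosity of μ plus C·‖μ‖. -/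
/-! At `z = μ(s)` the chain rule gives `(g ∘ μ)' / (i · g(μ)) = (μ' / (i μ)) · (λ + z h'(z) / h(z))`.
Near `0` the second factor is `λ + O(|z|)`, so by Jordan's inequality its argument is `O(|z|)`;
and arguments add under multiplication as long as their sum stays in `(-π/2, π/2)`. -/

/-- The rugosity bracket `[[z]]`: it equals `|arg z|` if `|arg z| < π/2`, and `+∞` otherwise. -/
noncomputable def rugosityBracket (z : ℂ) : ENNReal :=
  if |Complex.arg z| < Real.pi / 2 then ENNReal.ofReal |Complex.arg z| else ⊤

open Complex Metric Set
open scoped Real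

theorem abs_arg_le_pi_div_two_mul_abs_im_div_norm {w : ℂ} (hw : 0 < w.re) :
    |arg w| ≤ π / 2 * (|w.im| / ‖w‖) := by
  have hjordan := Real.mul_abs_le_abs_sin (abs_arg_lt_pi_div_two_iff.2 (Or.inl hw)).le
  rw [sin_arg, abs_div, abs_norm] at hjordan
  calc |arg w| = π / 2 * (2 / π * |arg w|) := by field_simp
    _ ≤ π / 2 * (|w.im| / ‖w‖) := by gcongr

theorem rugosityBracket_le_ofReal_of_re_pos {w : ℂ} {x : ℝ} (hw : 0 < w.re) (hx : |arg w| ≤ x) :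
    rugosityBracket w ≤ ENNReal.ofReal x := by
  rw [rugosityBracket, if_pos (abs_arg_lt_pi_div_two_iff.2 (Or.inl hw))]
  exact ENNReal.ofReal_le_ofReal hx

theorem rugosityBracket_ofReal_add_le {c : ℝ} (hc : 0 < c) {ζ : ℂ} (hζ : ‖ζ‖ ≤ c / 2) :
    rugosityBracket (c + ζ) ≤ ENNReal.ofReal (π * ‖ζ‖ / c) := by
  have hre : c / 2 ≤ (c + ζ).re := by
    have := neg_abs_le ζ.re
    have := abs_re_le_norm ζ
    simp only [add_re, ofReal_re]
    linarith
  have hnorm : c / 2 ≤ ‖(c : ℂ) + ζ‖ := hre.trans (re_le_norm _)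
  apply rugosityBracket_le_ofReal_of_re_pos (by linarith)
  calc |arg (c + ζ)| ≤ π / 2 * (|(c + ζ).im| / ‖(c : ℂ) + ζ‖) :=
        abs_arg_le_pi_div_two_mul_abs_im_div_norm (by linarith)
    _ ≤ π / 2 * (‖ζ‖ / (c / 2)) := by
        simp only [add_im, ofReal_im, zero_add]
        gcongr
        exact abs_im_le_norm ζ
    _ = π * ‖ζ‖ / c := by field_simp

theorem rugosityBracket_mul_le {w₁ w₂ : ℂ}
    (h : rugosityBracket w₁ + rugosityBracket w₂ < ENNReal.ofReal (π / 2)) :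
    rugosityBracket (w₁ * w₂) ≤ rugosityBracket w₁ + rugosityBracket w₂ := by
  rcases eq_or_ne w₁ 0 with rfl | hw₁
  · simp [rugosityBracket, Real.pi_pos]
  rcases eq_or_ne w₂ 0 with rfl | hw₂
  · simp [rugosityBracket, Real.pi_pos]
  have h₁ : |arg w₁| < π / 2 := by
    by_contra h₁
    simp [rugosityBracket, h₁] at h
  have h₂ : |arg w₂| < π / 2 := by
    by_contra h₂
    simp [rugosityBracket, h₂] at h
  simp only [rugosityBracket, if_pos h₁, if_pos h₂] at h ⊢
  rw [← ENNReal.ofReal_add (abs_nonneg _) (abs_nonneg _),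
    ENNReal.ofReal_lt_ofReal_iff Real.pi_div_two_pos] at h
  have hsum : |arg w₁ + arg w₂| < π / 2 := (abs_add_le _ _).trans_lt h
  have harg : arg (w₁ * w₂) = arg w₁ + arg w₂ := by
    refine arg_mul hw₁ hw₂ ⟨?_, ?_⟩ <;> linarith [abs_lt.1 hsum, Real.pi_pos]
  rw [harg, if_pos hsum, ← ENNReal.ofReal_add (abs_nonneg _) (abs_nonneg _)]
  exact ENNReal.ofReal_le_ofReal (abs_add_le _ _)

theorem hasDerivAt_cpow_const_mul {f : ℂ → ℂ} {z c : ℂ} (hz : z ∈ slitPlane)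
    (hf : DifferentiableAt ℂ f z) (hfz : f z ≠ 0) :
    HasDerivAt (fun w => w ^ c * f w) (z ^ c * f z / z * (c + z * deriv f z / f z)) z := by
  have hz0 : z ≠ 0 := slitPlane_ne_zero hz
  refine ((hasStrictDerivAt_cpow_const hz).hasDerivAt.mul hf.hasDerivAt).congr_deriv ?_
  rw [cpow_sub _ _ hz0, cpow_one]
  field_simp

theorem derivWithin_cpow_const_mul_comp_div {f : ℂ → ℂ} {c : ℂ} {μ : ℝ → ℂ} {μ' : ℂ}
    {S : Set ℝ} {s : ℝ} (hS : UniqueDiffWithinAt ℝ S s) (hμ : HasDerivWithinAt μ μ' S s)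
    (hz : μ s ∈ slitPlane) (hf : DifferentiableAt ℂ f (μ s)) (hfz : f (μ s) ≠ 0) :
    derivWithin ((fun w => w ^ c * f w) ∘ μ) S s / (I * (μ s ^ c * f (μ s))) =
      μ' / (I * μ s) * (c + μ s * deriv f (μ s) / f (μ s)) := by
  have hz0 : μ s ≠ 0 := slitPlane_ne_zero hz
  have hpow : μ s ^ c ≠ 0 := by simp [cpow_eq_zero_iff, hz0]
  rw [((hasDerivAt_cpow_const_mul hz hf hfz).comp_hasDerivWithinAt s hμ).derivWithin hS]
  field_simp

theorem rugosityBracket_derivWithin_cpow_const_mul_comp_le {f : ℂ → ℂ} {c : ℝ} (hc : 0 < c)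
    {μ : ℝ → ℂ} {μ' : ℂ} {S : Set ℝ} {s : ℝ} (hS : UniqueDiffWithinAt ℝ S s)
    (hμ : HasDerivWithinAt μ μ' S s) (hz : μ s ∈ slitPlane) (hf : DifferentiableAt ℂ f (μ s))
    (hfz : f (μ s) ≠ 0) {e : ENNReal} (he : rugosityBracket (μ' / (I * μ s)) ≤ e)
    (hsmall : ‖μ s * deriv f (μ s) / f (μ s)‖ ≤ c / 2)
    (hlt : e + ENNReal.ofReal (π * ‖μ s * deriv f (μ s) / f (μ s)‖ / c) < ENNReal.ofReal (π / 2)) :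
    rugosityBracket
        (derivWithin ((fun w => w ^ (c : ℂ) * f w) ∘ μ) S s / (I * (μ s ^ (c : ℂ) * f (μ s)))) ≤
      e + ENNReal.ofReal (π * ‖μ s * deriv f (μ s) / f (μ s)‖ / c) := by
  have hζ := rugosityBracket_ofReal_add_le hc hsmall
  rw [derivWithin_cpow_const_mul_comp_div hS hμ hz hf hfz]
  exact (rugosityBracket_mul_le ((add_le_add he hζ).trans_lt hlt)).trans (add_le_add he hζ)

theorem exists_closedBall_bounds_of_ne_zero {f : ℂ → ℂ} {a : ℂ} {R : ℝ} (hR : 0 < R)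
    (hf : DifferentiableOn ℂ f (ball a R)) (hfa : f a ≠ 0) :
    ∃ r ∈ Ioo 0 R, ∃ A > 0, ∃ K > 0,
      ∀ z ∈ closedBall a r, f z ≠ 0 ∧ ‖f z‖ ≤ A ∧ ‖deriv f z / f z‖ ≤ K := by
  have hcont : ContinuousAt f a :=
    (hf.differentiableAt (isOpen_ball.mem_nhds (mem_ball_self hR))).continuousAt
  obtain ⟨ε, hε, hεf⟩ := Metric.eventually_nhds_iff_ball.1 (hcont.eventually_ne hfa)
  set r := min ε R / 2
  have hr : 0 < r := by positivity
  have hrε : r < ε := (half_lt_self (by positivity)).trans_le (min_le_left _ _)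
  have hrR : r < R := (half_lt_self (by positivity)).trans_le (min_le_right _ _)
  have hne : ∀ z ∈ closedBall a r, f z ≠ 0 := fun z hz => hεf z (closedBall_subset_ball hrε hz)
  have hsub : closedBall a r ⊆ ball a R := closedBall_subset_ball hrR
  have hlog : ContinuousOn (fun z => deriv f z / f z) (closedBall a r) :=
    ((hf.deriv isOpen_ball).continuousOn.mono hsub).div (hf.continuousOn.mono hsub) hne
  obtain ⟨A, hA⟩ := (isCompact_closedBall a r).exists_bound_of_continuousOn
    (hf.continuousOn.mono hsub)
  obtain ⟨K, hK⟩ := (isCompact_closedBall a r).exists_bound_of_continuousOn hlog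
  refine ⟨r, ⟨hr, hrR⟩, max A 1, by positivity, max K 1, by positivity, fun z hz =>
    ⟨hne z hz, (hA z hz).trans (le_max_left _ _), (hK z hz).trans (le_max_left _ _)⟩⟩

theorem rugosity_estimate_forward_general
    (l : ℝ) (hl : 0 < l) (R₀ : ℝ) (hR₀ : 0 < R₀)
    (h : ℂ → ℂ) (hh : DifferentiableOn ℂ h (Metric.ball 0 R₀)) (hh0 : h 0 ≠ 0)
    (α β : ℝ) (hβ : β < Real.pi)
    (g : ℂ → ℂ) (hg : ∀ z : ℂ, g z = z ^ (l : ℂ) * h z) :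
    ∃ r ∈ Set.Ioo (0 : ℝ) R₀, ∃ C > (0 : ℝ),
      ∀ (μ μ' : ℝ → ℂ) (M : ℝ),
        (∀ s ∈ Set.Icc (0 : ℝ) 1, HasDerivWithinAt μ (μ' s) (Set.Icc (0 : ℝ) 1) s) →
        ContinuousOn μ' (Set.Icc (0 : ℝ) 1) →
        (∀ s ∈ Set.Icc (0 : ℝ) 1, μ' s ≠ 0) →
        (∀ s ∈ Set.Icc (0 : ℝ) 1, 0 < ‖μ s‖ ∧ ‖μ s‖ ≤ r) →
        (∀ s ∈ Set.Icc (0 : ℝ) 1, α ≤ Complex.arg (μ s) ∧ Complex.arg (μ s) ≤ β) →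
        IsGreatest ((fun s => ‖μ s‖) '' Set.Icc (0 : ℝ) 1) M →
        (∀ s ∈ Set.Icc (0 : ℝ) 1, ‖g (μ s)‖ ≤ C * M ^ l) ∧
        ((⨆ s : Set.Icc (0 : ℝ) 1, rugosityBracket (μ' s / (Complex.I * μ s))) +
              ENNReal.ofReal (C * M) < ENNReal.ofReal (Real.pi / 2) →
          ∀ s ∈ Set.Icc (0 : ℝ) 1,
            rugosityBracket
                (derivWithin (g ∘ μ) (Set.Icc (0 : ℝ) 1) s / (Complex.I * g (μ s))) ≤
              (⨆ s : Set.Icc (0 : ℝ) 1, rugosityBracket (μ' s / (Complex.I * μ s))) +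
                ENNReal.ofReal (C * M)) := by
  obtain rfl : g = fun w => w ^ (l : ℂ) * h w := funext hg
  obtain ⟨r, ⟨hr, hrR₀⟩, A, hA, K, hK, hbound⟩ := exists_closedBall_bounds_of_ne_zero hR₀ hh hh0
  refine ⟨min r (l / (2 * K)), ⟨by positivity, (min_le_left _ _).trans_lt hrR₀⟩,
    A + π * K / l, by positivity, ?_⟩
  rintro μ μ' M hμ - - hμr hμarg ⟨⟨s₀, hs₀, rfl⟩, hM⟩
  have hpt : ∀ s ∈ Icc (0 : ℝ) 1, ‖μ s‖ ≤ ‖μ s₀‖ ∧ μ s ∈ slitPlane ∧ μ s ∈ closedBall 0 r ∧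
      K * ‖μ s‖ ≤ l / 2 := by
    intro s hs
    have hle := (hμr s hs).2
    refine ⟨hM ⟨s, hs, rfl⟩, mem_slitPlane_iff_arg.2 ⟨?_, norm_pos_iff.1 (hμr s hs).1⟩,
      mem_closedBall_zero_iff.2 (hle.trans (min_le_left _ _)), ?_⟩
    · linarith [(hμarg s hs).2]
    · calc K * ‖μ s‖ ≤ K * (l / (2 * K)) := by gcongr; exact hle.trans (min_le_right _ _)
        _ = l / 2 := by field_simp
  refine ⟨fun s hs => ?_, fun hE s hs => ?_⟩
  · obtain ⟨hle, -, hball, -⟩ := hpt s hs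
    calc ‖μ s ^ (l : ℂ) * h (μ s)‖ = ‖μ s‖ ^ l * ‖h (μ s)‖ := by rw [norm_mul, norm_cpow_real]
      _ ≤ ‖μ s₀‖ ^ l * A := by gcongr; exact (hbound _ hball).2.1
      _ ≤ (A + π * K / l) * ‖μ s₀‖ ^ l := by
        rw [mul_comm]; gcongr; exact le_add_of_nonneg_right (by positivity)
  · obtain ⟨hle, hslit, hball, hsmall⟩ := hpt s hs
    obtain ⟨hne, -, hlog⟩ := hbound _ hball
    have hζ : ‖μ s * deriv h (μ s) / h (μ s)‖ ≤ K * ‖μ s‖ := by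
      rw [mul_div_assoc, norm_mul, mul_comm]; gcongr
    have hgrowth : ENNReal.ofReal (π * ‖μ s * deriv h (μ s) / h (μ s)‖ / l) ≤
        ENNReal.ofReal ((A + π * K / l) * ‖μ s₀‖) := by
      refine ENNReal.ofReal_le_ofReal ?_
      calc π * ‖μ s * deriv h (μ s) / h (μ s)‖ / l ≤ π * (K * ‖μ s‖) / l := by gcongr
        _ = π * K / l * ‖μ s‖ := by ring
        _ ≤ (A + π * K / l) * ‖μ s₀‖ := by gcongr; exact le_add_of_nonneg_left hA.le
    refine (rugosityBracket_derivWithin_cpow_const_mul_comp_le hl (uniqueDiffOn_Icc one_pos s hs)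
      (hμ s hs) hslit (hh.differentiableAt (isOpen_ball.mem_nhds
        (closedBall_subset_ball hrR₀ hball))) hne (le_iSup_of_le ⟨s, hs⟩ le_rfl)
      (hζ.trans hsmall) ((add_le_add le_rfl hgrowth).trans_lt hE)).trans
      (add_le_add le_rfl hgrowth)

/-- For `g(z) = z^λ·h(z)` with `λ > 0`, `h` holomorphic near `0`, `h(0) ≠ 0`, there are
`r ∈ (0,R₀)` and `C > 0` such that any `C¹` path `μ` in the punctured sector of radius `r`
satisfies `‖μ‖_g ≤ C·‖μ‖^λ` and, provided `e(μ) + C‖μ‖ < π/2`, the rugosity of `g ∘ μ` is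
bounded by the rugosity of `μ` plus `C·‖μ‖`. -/
theorem rugosity_estimate_forward
    (l : ℝ) (hl : 0 < l) (R₀ : ℝ) (hR₀ : 0 < R₀)
    (h : ℂ → ℂ) (hh : DifferentiableOn ℂ h (Metric.ball 0 R₀)) (hh0 : h 0 ≠ 0)
    (α β : ℝ) (hα : -Real.pi < α) (hαβ : α ≤ β) (hβ : β < Real.pi)
    (g : ℂ → ℂ) (hg : ∀ z : ℂ, g z = z ^ (l : ℂ) * h z) :
    ∃ r ∈ Set.Ioo (0 : ℝ) R₀, ∃ C > (0 : ℝ),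
      ∀ (μ μ' : ℝ → ℂ) (M : ℝ),
        (∀ s ∈ Set.Icc (0 : ℝ) 1, HasDerivWithinAt μ (μ' s) (Set.Icc (0 : ℝ) 1) s) →
        ContinuousOn μ' (Set.Icc (0 : ℝ) 1) →
        (∀ s ∈ Set.Icc (0 : ℝ) 1, μ' s ≠ 0) →
        (∀ s ∈ Set.Icc (0 : ℝ) 1, 0 < ‖μ s‖ ∧ ‖μ s‖ ≤ r) →
        (∀ s ∈ Set.Icc (0 : ℝ) 1, α ≤ Complex.arg (μ s) ∧ Complex.arg (μ s) ≤ β) →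
        IsGreatest ((fun s => ‖μ s‖) '' Set.Icc (0 : ℝ) 1) M →
        (∀ s ∈ Set.Icc (0 : ℝ) 1, ‖g (μ s)‖ ≤ C * M ^ l) ∧
        ((⨆ s : Set.Icc (0 : ℝ) 1, rugosityBracket (μ' s / (Complex.I * μ s))) +
              ENNReal.ofReal (C * M) < ENNReal.ofReal (Real.pi / 2) →
          ∀ s ∈ Set.Icc (0 : ℝ) 1,
            rugosityBracket
                (derivWithin (g ∘ μ) (Set.Icc (0 : ℝ) 1) s / (Complex.I * g (μ s))) ≤
              (⨆ s : Set.Icc (0 : ℝ) 1, rugosityBracket (μ' s / (Complex.I * μ s))) +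
                ENNReal.ofReal (C * M)) :=
  rugosity_estimate_forward_general l hl R₀ hR₀ h hh hh0 α β hβ g hg
end
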